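/- arXiv:2410.00977 — 3 statements merged into one kernel-verified Lean document; each statement's English description precedes it below -/
import Mathlib

section
/- Let Γ be a group acting by isometries on a nonempty metric space X such that the action is cocompact (there is a compact set K ⊆ X with Γ·K = X) and metrically proper (for every x ∈ X and r > 0 the set {g ∈ Γ : d(x, g·x) ≤ r} is finite). Let G be a finitely generated group and let (φ_n) ∈ Hom(G,Γ) be an X-non-divergent sequence. Then ω-almost surely φ_n factors through the limit quotient φ∞ : G ↠ G/sker φ_n; moreover, there is an ω-large set of indices on which all the φ_n agree up to post-composition with inner automorphisms of Γ (in particular ker φ_n = sker φ_n on that set). -/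
/-!
By cocompactness, each `φ n` can be conjugated so that a point of almost minimal
displacement lies within a fixed distance of a base point `x₀`; then every generator moves
`x₀` by a uniformly bounded amount. Metric properness leaves only finitely many candidates
for the images of the finitely many generators, so by the ultrafilter pigeonhole principle
the conjugated homomorphisms coincide on an `ω`-large set. Homomorphisms that are pairwise
conjugate have equal kernels, and this common kernel is then the `ω`-stable kernel.
-/

open Set Filter

noncomputable def scalingFactor {X G Γ : Type*} (d : X → X → ℝ) (a : Γ → X → X)
    (S : Set G) (φ : G → Γ) : ℝ :=
  ⨅ x : X, sSup ((fun s => d x (a (φ s) x)) '' S)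

def OmegaNonDivergent (ω : Ultrafilter ℕ) (f : ℕ → ℝ) : Prop :=
  ∃ C : ℝ, {n | f n ≤ C} ∈ ω

lemma exists_forall_lt_of_scalingFactor_lt {X G Γ : Type*} [Nonempty X] (d : X → X → ℝ)
    (a : Γ → X → X) {S : Set G} (hS : S.Finite) {φ : G → Γ} {C : ℝ}
    (h : scalingFactor d a S φ < C) : ∃ x, ∀ s ∈ S, d x (a (φ s) x) < C := by
  obtain ⟨x, hx⟩ := exists_lt_of_ciInf_lt h
  exact ⟨x, fun s hs => (le_csSup (hS.image _).bddAbove ⟨s, hs, rfl⟩).trans_lt hx⟩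

lemma Isometry.dist_apply_le {X : Type*} [PseudoMetricSpace X] {f : X → X} (hf : Isometry f)
    (x y : X) : dist y (f y) ≤ dist x (f x) + 2 * dist x y :=
  calc dist y (f y) ≤ dist y x + dist x (f x) + dist (f x) (f y) := dist_triangle4 _ _ _ _
    _ = dist x (f x) + 2 * dist x y := by rw [hf.dist_eq, dist_comm y x]; ring

lemma Ultrafilter.exists_eventually_eq_of_eventually_mem {ι β : Type*} {ω : Ultrafilter ι}
    {t : ι → β} {T : Set β} (hT : T.Finite) (h : ∀ᶠ n in ω, t n ∈ T) :
    ∃ v, ∀ᶠ n in ω, t n = v := by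
  obtain ⟨v, -, hv⟩ := (Ultrafilter.eventually_exists_mem_iff (P := fun v n => t n = v) hT).1
    (h.mono fun n hn => ⟨t n, hn, rfl⟩)
  exact ⟨v, hv⟩

lemma MonoidHom.eq_conj_of_eqOn_conj {G Γ : Type*} [Group G] [Group Γ] {S : Set G}
    (hS : Subgroup.closure S = ⊤) {φ ψ : G →* Γ} {c : Γ}
    (h : ∀ s ∈ S, ψ s = c * φ s * c⁻¹) (g : G) : ψ g = c * φ g * c⁻¹ :=
  DFunLike.congr_fun (MonoidHom.eq_of_eqOn_dense hS (g := (MulAut.conj c).toMonoidHom.comp φ) h) g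

section IsometricAction

variable {Γ X : Type*} [Group Γ] [PseudoMetricSpace X] (a : Γ →* (X ≃ᵢ X))

lemma dist_apply_conj (γ h : Γ) (x : X) :
    dist x (a (γ⁻¹ * h * γ) x) = dist (a γ x) (a h (a γ x)) := by
  rw [map_mul, map_mul, map_inv, ← (a γ).dist_eq]
  simp [IsometryEquiv.mul_apply]

lemma exists_forall_dist_apply_le_of_isCompact {K : Set X} (hK : IsCompact K)
    (hcover : ∀ x : X, ∃ γ : Γ, ∃ k ∈ K, a γ k = x) (x₀ : X) :
    ∃ D, ∀ x : X, ∃ γ : Γ, dist x (a γ x₀) ≤ D := by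
  obtain ⟨D, hD⟩ := hK.isBounded.subset_closedBall x₀
  refine ⟨D, fun x => ?_⟩
  obtain ⟨γ, k, hk, rfl⟩ := hcover x
  exact ⟨γ, by rw [(a γ).dist_eq]; exact hD hk⟩

lemma exists_conj_dist_apply_lt_of_scalingFactor_lt [Nonempty X] {x₀ : X} {D : ℝ}
    (hD : ∀ x : X, ∃ γ : Γ, dist x (a γ x₀) ≤ D) {G : Type*} {S : Set G} (hS : S.Finite)
    {φ : G → Γ} {C : ℝ} (hφ : scalingFactor dist (fun g x => a g x) S φ < C) :
    ∃ γ : Γ, ∀ s ∈ S, dist x₀ (a (γ⁻¹ * φ s * γ) x₀) < C + 2 * D := by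
  obtain ⟨x, hx⟩ := exists_forall_lt_of_scalingFactor_lt _ _ hS hφ
  obtain ⟨γ, hγ⟩ := hD x
  refine ⟨γ, fun s hs => ?_⟩
  calc dist x₀ (a (γ⁻¹ * φ s * γ) x₀)
      ≤ dist x (a (φ s) x) + 2 * dist x (a γ x₀) := by
        rw [dist_apply_conj]; exact (a (φ s)).isometry.dist_apply_le _ _
    _ < C + 2 * D := by linarith [hx s hs]

end IsometricAction

lemma apply_eq_one_iff_eventually_of_pairwise_conj {ι G Γ : Type*} [Group G] [Group Γ]
    {ω : Ultrafilter ι} {φ : ι → G →* Γ} {I : Set ι} (hI : I ∈ ω)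
    (hconj : ∀ n ∈ I, ∀ n' ∈ I, ∃ γ : Γ, ∀ g : G, φ n' g = γ * φ n g * γ⁻¹)
    {n : ι} (hn : n ∈ I) (g : G) : φ n g = 1 ↔ ∀ᶠ k in ω, φ k g = 1 := by
  have transfer : ∀ n ∈ I, ∀ n' ∈ I, φ n g = 1 → φ n' g = 1 := fun n hn n' hn' h1 => by
    obtain ⟨γ, hγ⟩ := hconj n hn n' hn'
    rw [hγ, h1, mul_one, mul_inv_cancel]
  refine ⟨fun h1 => mem_of_superset hI fun k hk => transfer n hn k hk h1, fun h1 => ?_⟩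
  obtain ⟨k, hk1, hkI⟩ := Ultrafilter.nonempty_of_mem (inter_mem h1 hI)
  exact transfer k hkI n hn hk1
theorem nondivergent_factors_general
    (Γ : Type*) [Group Γ] (X : Type*) [MetricSpace X] [Nonempty X]
    (a : Γ →* (X ≃ᵢ X))
    (hcocpt : ∃ K : Set X, IsCompact K ∧ ∀ x : X, ∃ g : Γ, ∃ k ∈ K, a g k = x)
    (hproper : ∀ (x : X) (r : ℝ), 0 < r → {g : Γ | dist x (a g x) ≤ r}.Finite)
    (G : Type*) [Group G] (S : Set G) (hSfin : S.Finite)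
    (hSgen : Subgroup.closure S = ⊤)
    (ω : Ultrafilter ℕ)
    (φ : ℕ → G →* Γ)
    (hnd : OmegaNonDivergent ω (fun n => scalingFactor dist (fun g x => a g x) S (φ n))) :
    ({n : ℕ | ∀ g : G, ({k : ℕ | φ k g = 1} ∈ ω) → φ n g = 1} ∈ ω) ∧
    ∃ I : Set ℕ, I ∈ ω ∧
      (∀ n ∈ I, ∀ n' ∈ I, ∃ γ : Γ, ∀ g : G, φ n' g = γ * φ n g * γ⁻¹) ∧
      (∀ n ∈ I, {g : G | φ n g = 1} = {g : G | {k : ℕ | φ k g = 1} ∈ ω}) := by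
  obtain ⟨C, hC⟩ := hnd
  obtain ⟨K, hK, hcover⟩ := hcocpt
  obtain ⟨x₀⟩ := ‹Nonempty X›
  obtain ⟨D, hD⟩ := exists_forall_dist_apply_le_of_isCompact a hK hcover x₀
  have hsmall : ∀ n, ∃ γ : Γ, scalingFactor dist (fun g x => a g x) S (φ n) ≤ C →
      ∀ s ∈ S, dist x₀ (a (γ⁻¹ * φ n s * γ) x₀) < C + 1 + 2 * D := fun n => by
    by_cases hn : scalingFactor dist (fun g x => a g x) S (φ n) ≤ C
    · obtain ⟨γ, hγ⟩ := exists_conj_dist_apply_lt_of_scalingFactor_lt a hD hSfin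
        (hn.trans_lt (lt_add_one C))
      exact ⟨γ, fun _ => hγ⟩
    · exact ⟨1, fun h => absurd h hn⟩
  choose γ hγ using hsmall
  have : Finite S := hSfin.to_subtype
  obtain ⟨v, hv⟩ := Ultrafilter.exists_eventually_eq_of_eventually_mem
    (t := fun n (s : S) => (γ n)⁻¹ * φ n s * γ n)
    (Set.Finite.pi fun _ => hproper x₀ (max (C + 1 + 2 * D) 1) (by positivity))
    (Eventually.mono hC fun n hn s _ => (hγ n hn s s.2).le.trans (le_max_left _ _))
  set I := {n | (fun s : S => (γ n)⁻¹ * φ n s * γ n) = v}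
  have hconj : ∀ n ∈ I, ∀ n' ∈ I, ∃ c : Γ, ∀ g : G, φ n' g = c * φ n g * c⁻¹ :=
    fun n hn n' hn' => ⟨γ n' * (γ n)⁻¹, MonoidHom.eq_conj_of_eqOn_conj hSgen fun s hs =>
      calc φ n' s = γ n' * ((γ n')⁻¹ * φ n' s * γ n') * (γ n')⁻¹ := by group
        _ = γ n' * (γ n)⁻¹ * φ n s * (γ n' * (γ n)⁻¹)⁻¹ := by
          rw [congr_fun hn' ⟨s, hs⟩, ← congr_fun hn ⟨s, hs⟩]; group⟩
  have hker {n : ℕ} (hn : n ∈ I) (g : G) : φ n g = 1 ↔ ∀ᶠ k in ω, φ k g = 1 :=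
    apply_eq_one_iff_eventually_of_pairwise_conj hv hconj hn g
  exact ⟨mem_of_superset hv fun n hn g hg => (hker hn g).2 hg,
    I, hv, hconj, fun n hn => Set.ext (hker hn)⟩

/-- If `Γ` acts isometrically, cocompactly and metrically properly on a
nonempty metric space `X`, then every `X`-non-divergent sequence `(φ_n) ∈ Hom(G,Γ)`
ω-almost surely factors through the limit quotient `φ∞ : G ↠ G/sker φ_n`; moreover on an
ω-large set of indices all the `φ_n` agree up to post-composition with inner automorphisms
of `Γ`, and on that set `ker φ_n = sker φ_n`. -/
theorem nondivergent_factors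
    (Γ : Type*) [Group Γ] (X : Type*) [MetricSpace X] [Nonempty X]
    (a : Γ →* (X ≃ᵢ X))
    (hcocpt : ∃ K : Set X, IsCompact K ∧ ∀ x : X, ∃ g : Γ, ∃ k ∈ K, a g k = x)
    (hproper : ∀ (x : X) (r : ℝ), 0 < r → {g : Γ | dist x (a g x) ≤ r}.Finite)
    (G : Type*) [Group G] (S : Set G) (hSfin : S.Finite)
    (hSgen : Subgroup.closure S = ⊤)
    (ω : Ultrafilter ℕ) (hω : ∀ s : Set ℕ, s.Finite → s ∉ ω)
    (φ : ℕ → G →* Γ)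
    (hnd : OmegaNonDivergent ω (fun n => scalingFactor dist (fun g x => a g x) S (φ n))) :
    ({n : ℕ | ∀ g : G, ({k : ℕ | φ k g = 1} ∈ ω) → φ n g = 1} ∈ ω) ∧
    ∃ I : Set ℕ, I ∈ ω ∧
      (∀ n ∈ I, ∀ n' ∈ I, ∃ γ : Γ, ∀ g : G, φ n' g = γ * φ n g * γ⁻¹) ∧
      (∀ n ∈ I, {g : G | φ n g = 1} = {g : G | {k : ℕ | φ k g = 1} ∈ ω}) :=
  nondivergent_factors_general Γ X a hcocpt hproper G S hSfin hSgen ω φ hnd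
end

section
/- For any group Γ, the following are equivalent: (1) Γ is equationally noetherian; (2) for every finitely generated group G and every sequence (φ_n) ∈ Hom(G,Γ), ω-almost surely φ_n factors through the limit quotient φ∞ : G ↠ G/sker φ_n, i.e. {n ∈ ℕ : sker φ_n ⊆ ker φ_n} ∈ ω; (3) for every finitely generated group G and every sequence (φ_n) ∈ Hom(G,Γ), there exists some n such that φ_n factors through the limit quotient φ∞ (i.e. sker φ_n ⊆ ker φ_n). -/
/-! If `Γ` is equationally noetherian, the words that `φ_k ∘ π` kills almost surely
(for a presentation `π : F_m ↠ G`) are implied by finitely many of them, and these finitely many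
hold simultaneously almost surely. Conversely, if some system `E` has no finite subsystem with the
same solutions, enumerate `E` and pick for each `k` a tuple solving the first `k` equations but not
all of `E`; every equation of `E` then holds cofinitely, hence `ω`-almost surely, along the
resulting homomorphisms `F_m → Γ`, yet none of them factors through the limit quotient. -/

open Set Filter

def EquationallyNoetherian (Γ : Type*) [Group Γ] : Prop :=
  ∀ (n : ℕ) (E : Set (FreeGroup (Fin n))), ∃ E₀ : Set (FreeGroup (Fin n)),
    E₀ ⊆ E ∧ E₀.Finite ∧
    {g : Fin n → Γ | ∀ w ∈ E, FreeGroup.lift g w = 1} =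
      {g : Fin n → Γ | ∀ w ∈ E₀, FreeGroup.lift g w = 1}

def solutionSet {α : Type*} (Γ : Type*) [Group Γ] (E : Set (FreeGroup α)) : Set (α → Γ) :=
  {g | ∀ w ∈ E, FreeGroup.lift g w = 1}

section

variable {Γ : Type*} [Group Γ]

theorem solutionSet_anti {α : Type*} {E₀ E : Set (FreeGroup α)} (h : E₀ ⊆ E) :
    solutionSet Γ E ⊆ solutionSet Γ E₀ :=
  fun _ hg w hw => hg w (h hw)

/-- `φ n` kills the `l`-stable kernel of `(φ k)`, i.e. factors through the limit quotient. -/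
def FactorsThroughLimit {ι G : Type*} [Group G] (l : Filter ι) (φ : ι → G →* Γ) (n : ι) : Prop :=
  ∀ g : G, (∀ᶠ k in l, φ k g = 1) → φ n g = 1

theorem EquationallyNoetherian.eventually_factorsThroughLimit (hΓ : EquationallyNoetherian Γ)
    {ι G : Type*} [Group G] (hG : Group.FG G) (l : Filter ι) (φ : ι → G →* Γ) :
    ∀ᶠ n in l, FactorsThroughLimit l φ n := by
  obtain ⟨α, _, π, hπ⟩ := Group.fg_iff_exists_freeGroup_hom_surjective_finite.mp hG
  obtain ⟨m, ⟨e⟩⟩ := Finite.exists_equiv_fin α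
  set ρ : FreeGroup (Fin m) →* G := π.comp (FreeGroup.freeGroupCongr e).symm.toMonoidHom
  have hρ : Function.Surjective ρ := hπ.comp (FreeGroup.freeGroupCongr e).symm.surjective
  obtain ⟨E₀, hE₀, hE₀fin, hV⟩ := hΓ m {w | ∀ᶠ k in l, φ k (ρ w) = 1}
  filter_upwards [(eventually_all_finite hE₀fin).mpr fun w hw => hE₀ hw] with n hn g hg
  obtain ⟨w, rfl⟩ := hρ g
  have hsol : FreeGroup.lift.symm ((φ n).comp ρ) ∈ solutionSet Γ E₀ :=
    fun v hv => by simpa using hn v hv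
  rw [solutionSet, ← hV] at hsol
  simpa using hsol w hg

theorem exists_tuples_eventually_solving_of_not_finitely_determined {α : Type*} [Countable α]
    {E : Set (FreeGroup α)}
    (hE : ∀ E₀ ⊆ E, E₀.Finite → solutionSet Γ E ≠ solutionSet Γ E₀) :
    ∃ g : ℕ → α → Γ, (∀ w ∈ E, ∀ᶠ k in atTop, FreeGroup.lift (g k) w = 1) ∧
      ∀ k, g k ∉ solutionSet Γ E := by
  obtain ⟨e, he⟩ := exists_surjective_nat (FreeGroup α)
  have hstep : ∀ k : ℕ, ∃ g, g ∈ solutionSet Γ (e '' Iic k ∩ E) ∧ g ∉ solutionSet Γ E := by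
    intro k
    by_contra! hsub
    exact hE _ inter_subset_right (((finite_Iic k).image e).inter_of_left E)
      (Subset.antisymm (solutionSet_anti inter_subset_right) hsub)
  choose g hg hgE using hstep
  refine ⟨g, fun w hw => ?_, hgE⟩
  obtain ⟨i, rfl⟩ := he w
  filter_upwards [eventually_ge_atTop i] with k hk
  exact hg k (e i) ⟨mem_image_of_mem e hk, hw⟩

theorem equationallyNoetherian_of_exists_factorsThroughLimit {l : Filter ℕ} (hl : l ≤ atTop)
    (h : ∀ (G : Type) [Group G], Group.FG G → ∀ φ : ℕ → G →* Γ, ∃ n, FactorsThroughLimit l φ n) :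
    EquationallyNoetherian Γ := by
  by_contra hΓ
  obtain ⟨m, E, hE⟩ : ∃ m, ∃ E : Set (FreeGroup (Fin m)),
      ∀ E₀ ⊆ E, E₀.Finite → solutionSet Γ E ≠ solutionSet Γ E₀ := by
    simpa [EquationallyNoetherian, solutionSet] using hΓ
  obtain ⟨g, hgE, hg⟩ := exists_tuples_eventually_solving_of_not_finitely_determined hE
  obtain ⟨n, hn⟩ := h (FreeGroup (Fin m)) inferInstance fun k => FreeGroup.lift (g k)
  exact hg n fun w hw => hn w (hl (hgE w hw))

end

/-- [GR-HU, Lemma 3.5]. A group `Γ` is equationally noetherian iff for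
every finitely generated group `G` and every sequence `(φ_n) ∈ Hom(G,Γ)`, ω-almost surely
`φ_n` factors through the limit quotient (i.e. `sker φ_n ⊆ ker φ_n`), iff for every such
sequence some `φ_n` factors through the limit quotient. -/
theorem equationallyNoetherian_iff_factoring
    (Γ : Type*) [Group Γ]
    (ω : Ultrafilter ℕ) (hω : ∀ s : Set ℕ, s.Finite → s ∉ ω) :
    (EquationallyNoetherian Γ ↔
      ∀ (G : Type) [Group G], Group.FG G → ∀ φ : ℕ → G →* Γ,
        {n : ℕ | ∀ g : G, ({k : ℕ | φ k g = 1} ∈ ω) → φ n g = 1} ∈ ω) ∧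
    (EquationallyNoetherian Γ ↔
      ∀ (G : Type) [Group G], Group.FG G → ∀ φ : ℕ → G →* Γ,
        ∃ n : ℕ, ∀ g : G, ({k : ℕ | φ k g = 1} ∈ ω) → φ n g = 1) := by
  have hω_le : (ω : Filter ℕ) ≤ atTop := by
    rw [← Nat.cofinite_eq_atTop]
    exact fun s hs => Ultrafilter.compl_notMem_iff.mp (hω _ hs)
  have h12 (hΓ : EquationallyNoetherian Γ) (G : Type) [Group G] (hG : Group.FG G) φ :=
    hΓ.eventually_factorsThroughLimit hG (ω : Filter ℕ) φ
  have h31 := equationallyNoetherian_of_exists_factorsThroughLimit (Γ := Γ) hω_le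
  exact ⟨⟨h12, fun h => h31 fun G _ hG φ => Eventually.exists (h G hG φ)⟩,
    ⟨fun hΓ G _ hG φ => (h12 hΓ G hG φ).exists, h31⟩⟩
end

section
/- Let Γ be a group, G a finitely generated group, and (φ_n) ∈ Hom(G,Γ) a sequence such that the limit group L = G/sker φ_n is finitely presented relative to subgroups P₁,…,P_k of L. Suppose that for each j there is a subgroup P̃_j ≤ G with φ∞(P̃_j) = P_j such that φ_n|_{P̃_j} factors through φ∞|_{P̃_j} ω-almost surely (i.e. {n : ker φ∞ ∩ P̃_j ⊆ ker φ_n} ∈ ω). Then φ_n factors through φ∞ ω-almost surely. -/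
/-!
The free product `F̃` of the lifts `P̃ⱼ` with the free group maps into `G` and onto the free
product `F = (∗ⱼ Pⱼ) ∗ F_r` presenting `L`, compatibly with the quotient maps to `L`. Whenever
`φ_n` is well defined modulo `sker φ_n` on every `P̃ⱼ`, the composite `F̃ → G → Γ` descends to
a homomorphism `Ψ_n : F → Γ`. Each of the finitely many relators and each of the finitely many
generators of `G` is matched by a fixed element of `F̃`, independent of `n`, the discrepancy
lying in `sker φ_n`. So for ω-almost every `n` the map `Ψ_n` kills the relators, hence induces
`L → Γ`, and this map composed with `G → L` agrees with `φ_n` on generators of `G`.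
-/

open Set Filter

def stableKer (ω : Ultrafilter ℕ) {G Γ : Type*} [Group G] [Group Γ]
    (φ : ℕ → G →* Γ) : Subgroup G where
  carrier := {g | {n | φ n g = 1} ∈ ω}
  one_mem' := by
    have : {n : ℕ | φ n 1 = 1} = Set.univ := by
      ext n; simp
    simp only [Set.mem_setOf_eq] at *
    rw [this]
    exact Filter.univ_mem
  mul_mem' := by
    intro a b ha hb
    have : {n | φ n a = 1} ∩ {n | φ n b = 1} ∈ ω := Filter.inter_mem ha hb
    refine Filter.mem_of_superset this ?_
    rintro n ⟨h1, h2⟩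
    simp only [Set.mem_setOf_eq] at h1 h2 ⊢
    simp [map_mul, h1, h2]
  inv_mem' := by
    intro a ha
    refine Filter.mem_of_superset ha ?_
    intro n h1
    simp only [Set.mem_setOf_eq] at h1 ⊢
    simp [map_inv, h1]

instance stableKer_normal (ω : Ultrafilter ℕ) {G Γ : Type*} [Group G] [Group Γ]
    (φ : ℕ → G →* Γ) : (stableKer ω φ).Normal := by
  constructor
  intro a ha g
  refine Filter.mem_of_superset ha ?_
  intro n h1
  simp only [Set.mem_setOf_eq] at h1 ⊢
  simp [map_mul, h1]

/-- `L` is finitely presented relative to the subgroups `P j`: there is a surjection from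
`(P 1 ∗ ⋯ ∗ P k) ∗ F`, `F` free of finite rank, onto `L` restricting to the inclusion on
each `P j`, whose kernel is the normal closure of a finite set. -/
def RelFinitelyPresented {L : Type*} [Group L] {k : ℕ} (P : Fin k → Subgroup L) : Prop :=
  ∃ (r : ℕ)
    (π : Monoid.Coprod (Monoid.CoprodI fun j : Fin k => ↥(P j)) (FreeGroup (Fin r)) →* L),
    Function.Surjective π ∧
    (∀ (j : Fin k) (x : ↥(P j)),
      π (Monoid.Coprod.inl (Monoid.CoprodI.of x)) = (x : L)) ∧
    ∃ T : Set (Monoid.Coprod (Monoid.CoprodI fun j : Fin k => ↥(P j)) (FreeGroup (Fin r))),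
      T.Finite ∧ π.ker = Subgroup.normalClosure T

open Function Monoid
open scoped Monoid.Coprod

theorem Monoid.Coprod.map_surjective {M N M' N' : Type*} [Monoid M] [Monoid N] [Monoid M']
    [Monoid N'] {f : M →* M'} {g : N →* N'} (hf : Surjective f) (hg : Surjective g) :
    Surjective (Coprod.map f g) := by
  intro w
  induction w using Coprod.induction_on with
  | inl m => obtain ⟨x, rfl⟩ := hf m; exact ⟨.inl x, rfl⟩
  | inr n => obtain ⟨y, rfl⟩ := hg n; exact ⟨.inr y, rfl⟩
  | mul _ _ hx hy =>
    obtain ⟨⟨a, rfl⟩, ⟨b, rfl⟩⟩ := And.intro hx hy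
    exact ⟨a * b, map_mul _ a b⟩

theorem Monoid.CoprodI.lift_of_comp_surjective {ι : Type*} {M N : ι → Type*}
    [∀ i, Monoid (M i)] [∀ i, Monoid (N i)] {f : ∀ i, M i →* N i} (hf : ∀ i, Surjective (f i)) :
    Surjective (CoprodI.lift fun i => CoprodI.of.comp (f i)) := by
  intro w
  induction w using CoprodI.induction_on with
  | one => exact ⟨1, map_one _⟩
  | of i n => obtain ⟨m, rfl⟩ := hf i n; exact ⟨.of m, CoprodI.lift_of _ m⟩
  | mul _ _ hx hy =>
    obtain ⟨⟨a, rfl⟩, ⟨b, rfl⟩⟩ := And.intro hx hy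
    exact ⟨a * b, map_mul _ a b⟩

theorem MonoidHom.ker_le_ker_of_forall_exists_lift {F L G Γ : Type*} [Group F] [Group L]
    [Group G] [Group Γ] {π : F →* L} (hπ : Surjective π) {Ψ : F →* Γ} (hΨ : π.ker ≤ Ψ.ker)
    {q : G →* L} {ψ : G →* Γ} {S : Set G} (hS : Subgroup.closure S = ⊤)
    (hlift : ∀ s ∈ S, ∃ w, π w = q s ∧ Ψ w = ψ s) :
    q.ker ≤ ψ.ker := by
  set Ψ' := π.liftOfSurjective hπ ⟨Ψ, hΨ⟩
  have hψ : ψ = Ψ'.comp q := MonoidHom.eq_of_eqOn_dense hS fun s hs => by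
    obtain ⟨w, hπw, hΨw⟩ := hlift s hs
    simp [Ψ', ← hπw, hΨw]
  intro g hg
  rw [MonoidHom.mem_ker, hψ, MonoidHom.comp_apply, hg, map_one]

theorem ker_le_ker_of_lift_square {F F' L G Γ : Type*} [Group F] [Group F'] [Group L]
    [Group G] [Group Γ] {π : F →* L} (hπ : Surjective π) {T : Set F}
    (hT : π.ker = Subgroup.normalClosure T) {θ : F' →* F} {Λ : F' →* G} {q : G →* L}
    (hcomm : π.comp θ = q.comp Λ) {ψ : G →* Γ} {Ψ : F →* Γ} (hΨ : Ψ.comp θ = ψ.comp Λ)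
    (hrel : ∀ t ∈ T, ∃ t', θ t' = t ∧ ψ (Λ t') = 1) {S : Set G}
    (hS : Subgroup.closure S = ⊤) (hgen : ∀ s ∈ S, ∃ w, q (Λ w) = q s ∧ ψ (Λ w) = ψ s) :
    q.ker ≤ ψ.ker := by
  have hTΨ : T ⊆ Ψ.ker := by
    rintro _ ht
    obtain ⟨t', rfl, ht'⟩ := hrel _ ht
    rw [SetLike.mem_coe, MonoidHom.mem_ker, ← MonoidHom.comp_apply, hΨ, MonoidHom.comp_apply, ht']
  refine MonoidHom.ker_le_ker_of_forall_exists_lift hπ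
    (hT ▸ Subgroup.normalClosure_le_normal hTΨ) hS fun s hs => ?_
  obtain ⟨w, hqw, hψw⟩ := hgen s hs
  refine ⟨θ w, ?_, ?_⟩
  · rw [← MonoidHom.comp_apply, hcomm, MonoidHom.comp_apply, hqw]
  · rw [← MonoidHom.comp_apply, hΨ, MonoidHom.comp_apply, hψw]

theorem exists_lifted_presentation {G L Γ ι κ : Type*} [Group G] [Group L] [Group Γ]
    {q : G →* L} (hq : Surjective q) (Pt : ι → Subgroup G)
    (π : CoprodI (fun j => (Pt j).map q) ∗ FreeGroup κ →* L)
    (hπ : ∀ j (x : (Pt j).map q), π (.inl (.of x)) = x) :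
    ∃ (Λ : CoprodI (fun j => Pt j) ∗ FreeGroup κ →* G)
      (θ : CoprodI (fun j => Pt j) ∗ FreeGroup κ →* CoprodI (fun j => (Pt j).map q) ∗ FreeGroup κ),
      Surjective θ ∧ π.comp θ = q.comp Λ ∧
      ∀ ψ : G →* Γ, (∀ j, ∀ g ∈ Pt j, g ∈ q.ker → ψ g = 1) →
        ∃ Ψ : CoprodI (fun j => (Pt j).map q) ∗ FreeGroup κ →* Γ, Ψ.comp θ = ψ.comp Λ := by
  choose ρ hρ using fun i => hq (π (.inr (.of i)))
  refine ⟨Coprod.lift (CoprodI.lift fun j => (Pt j).subtype) (FreeGroup.lift ρ),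
    Coprod.map (CoprodI.lift fun j => CoprodI.of.comp (q.subgroupMap (Pt j))) (.id _),
    Coprod.map_surjective (CoprodI.lift_of_comp_surjective fun j => q.subgroupMap_surjective _)
      surjective_id, ?_, fun ψ hψ => ?_⟩
  · ext j x <;> simp [hπ, hρ]
  · have hker : ∀ j, (q.subgroupMap (Pt j)).ker ≤ (ψ.comp (Pt j).subtype).ker :=
      fun j x hx => hψ j x x.2 (congrArg Subtype.val hx)
    refine ⟨Coprod.lift (CoprodI.lift fun j =>
      (q.subgroupMap (Pt j)).liftOfSurjective (q.subgroupMap_surjective _) ⟨_, hker j⟩)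
      (FreeGroup.lift (ψ ∘ ρ)), ?_⟩
    ext j x <;> simp

theorem eventually_map_eq_of_mk_eq {G Γ : Type*} [Group G] [Group Γ] {ω : Ultrafilter ℕ}
    {φ : ℕ → G →* Γ} {a b : G} (h : (a : G ⧸ stableKer ω φ) = b) :
    ∀ᶠ n in (ω : Filter ℕ), φ n a = φ n b :=
  Filter.Eventually.mono (QuotientGroup.eq.1 h) fun n hn => by
    rwa [map_mul, map_inv, inv_mul_eq_one] at hn

theorem factors_of_relatively_presented_general
    (Γ : Type*) [Group Γ] (G : Type*) [Group G] (hG : Group.FG G)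
    (ω : Ultrafilter ℕ)
    (φ : ℕ → G →* Γ) (k : ℕ)
    (P : Fin k → Subgroup (G ⧸ stableKer ω φ))
    (hfp : RelFinitelyPresented P)
    (hlift : ∀ j : Fin k, ∃ Pt : Subgroup G,
      Subgroup.map (QuotientGroup.mk' (stableKer ω φ)) Pt = P j ∧
      {n : ℕ | ∀ g ∈ Pt, g ∈ stableKer ω φ → φ n g = 1} ∈ ω) :
    {n : ℕ | ∀ g ∈ stableKer ω φ, φ n g = 1} ∈ ω := by
  set q := QuotientGroup.mk' (stableKer ω φ)
  obtain ⟨r, π, hπ, hπP, T, hTfin, hker⟩ := hfp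
  choose Pt hPt hgood using hlift
  obtain rfl : P = fun j => (Pt j).map q := funext fun j => (hPt j).symm
  obtain ⟨S, hS, hSfin⟩ := Group.fg_iff.mp hG
  obtain ⟨Λ, θ, hθ, hcomm, hfactor⟩ :=
    exists_lifted_presentation (Γ := Γ) (QuotientGroup.mk'_surjective _) Pt π hπP
  have hqΛ (w) : q (Λ w) = π (θ w) := by rw [← MonoidHom.comp_apply, ← hcomm]; rfl
  have hrel : ∀ t ∈ T, ∀ᶠ n in (ω : Filter ℕ), ∃ t', θ t' = t ∧ φ n (Λ t') = 1 := by
    intro t ht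
    obtain ⟨t', rfl⟩ := hθ t
    have ht1 : q (Λ t') = q 1 := by
      rw [hqΛ, map_one]; exact (hker ▸ Subgroup.subset_normalClosure ht : θ t' ∈ π.ker)
    filter_upwards [eventually_map_eq_of_mk_eq ht1] with n hn
    exact ⟨t', rfl, hn.trans (map_one _)⟩
  have hgen : ∀ s ∈ S, ∀ᶠ n in (ω : Filter ℕ), ∃ w, q (Λ w) = q s ∧ φ n (Λ w) = φ n s := by
    intro s _
    obtain ⟨w, hw⟩ := (hπ.comp hθ) (q s)
    have hws : q (Λ w) = q s := (hqΛ w).trans hw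
    filter_upwards [eventually_map_eq_of_mk_eq hws] with n hn
    exact ⟨w, hws, hn⟩
  filter_upwards [Filter.eventually_all.2 hgood, hTfin.eventually_all.2 hrel,
    hSfin.eventually_all.2 hgen] with n hgood_n hrel_n hgen_n
  obtain ⟨Ψ, hΨ⟩ := hfactor (φ n) (by simpa only [q, QuotientGroup.ker_mk'] using hgood_n)
  have hK := ker_le_ker_of_lift_square hπ hker hcomm hΨ hrel_n hS hgen_n
  rwa [QuotientGroup.ker_mk'] at hK

/-- [GR-HU, Lemma 3.19]. If the limit group `L = G/sker φ_n` is finitely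
presented relative to subgroups `P₁, …, P_k`, and each `P j` admits a lift `P̃ j ≤ G` with
`φ∞(P̃ j) = P j` such that `φ_n|_{P̃ j}` ω-almost surely factors through `φ∞|_{P̃ j}`, then
ω-almost surely `φ_n` factors through `φ∞`. -/
theorem factors_of_relatively_presented
    (Γ : Type*) [Group Γ] (G : Type*) [Group G] (hG : Group.FG G)
    (ω : Ultrafilter ℕ) (hω : ∀ s : Set ℕ, s.Finite → s ∉ ω)
    (φ : ℕ → G →* Γ) (k : ℕ)
    (P : Fin k → Subgroup (G ⧸ stableKer ω φ))
    (hfp : RelFinitelyPresented P)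
    (hlift : ∀ j : Fin k, ∃ Pt : Subgroup G,
      Subgroup.map (QuotientGroup.mk' (stableKer ω φ)) Pt = P j ∧
      {n : ℕ | ∀ g ∈ Pt, g ∈ stableKer ω φ → φ n g = 1} ∈ ω) :
    {n : ℕ | ∀ g ∈ stableKer ω φ, φ n g = 1} ∈ ω :=
  factors_of_relatively_presented_general Γ G hG ω φ k P hfp hlift
end
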